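/- arXiv:1112.3719 — 2 statements merged into one kernel-verified Lean document; each statement's English description precedes it below -/
import Mathlib

section
/- The 2k-fold self-convolution identity of Catalan numbers: for positive integers r and n with r <= n, the sum over all compositions i_1 + ... + i_r = n of positive integers of the product C_{i_1 - 1} * ... * C_{i_r - 1} equals (r/(2n-r)) * binomial(2n-r, n). -/
/-!
With `c = ∑ Cⱼ Xʲ`, the sum over compositions of `n` into `r` positive parts is the coefficient
of `Xⁿ` in `(X c)ʳ`, i.e. the coefficient of `X^d` in `cʳ`, where `n = r + d`. The functional
equation `c = 1 + X c²` gives `cʳ⁺¹ = cʳ + X cʳ⁺²`, a Pascal-type recurrence for these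
coefficients, which is also satisfied by the ballot numbers `C(r+2d-1, d) - C(r+2d-1, r+d)`;
both agree on the boundary (`r = 0 < d` or `d = 0 < r`), and the ballot number equals
`r/(r+2d) · C(r+2d, d)`.
-/

open Finset

namespace PowerSeries

theorem coeff_pow_eq_sum_fin_tuples {R : Type*} [CommSemiring R] (φ : R⟦X⟧) (r n : ℕ) :
    coeff n (φ ^ r) = ∑ f ∈ (univ : Finset (Fin r → Fin (n + 1))).filter
      (fun f => ∑ j, (f j : ℕ) = n), ∏ j, coeff (f j) φ := by
  classical
  rw [← Fin.prod_const r φ, coeff_prod]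
  have hmod {l : Fin r →₀ ℕ} (hl : l ∈ finsuppAntidiag univ n) (j : Fin r) :
      l j % (n + 1) = l j :=
    Nat.mod_eq_of_lt <| Nat.lt_succ_of_le <| (mem_finsuppAntidiag.1 hl).1 ▸
      single_le_sum (fun _ _ => Nat.zero_le _) (mem_univ j)
  refine sum_nbij' (fun l j => Fin.ofNat (n + 1) (l j))
    (fun f => Finsupp.equivFunOnFinite.symm fun j => (f j : ℕ)) ?_ ?_ ?_ ?_ ?_
  · intro l hl
    simpa [hmod hl] using hl
  · intro f hf
    simp_all
  · intro l hl
    ext j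
    simp [hmod hl]
  · intro f _
    ext j
    simp
  · intro l hl
    simp [hmod hl]

open Classical in
theorem coeff_X_mul_pow_eq_sum_compositions {R : Type*} [CommSemiring R] (φ : R⟦X⟧) (r n : ℕ) :
    coeff n ((X * φ) ^ r) = ∑ f ∈ (univ : Finset (Fin r → Fin (n + 1))).filter
      (fun f => (∀ j, 1 ≤ (f j : ℕ)) ∧ ∑ j, (f j : ℕ) = n), ∏ j, coeff (f j - 1) φ := by
  rw [coeff_pow_eq_sum_fin_tuples, sum_filter, sum_filter]
  refine sum_congr rfl fun f _ => ?_
  by_cases hpos : ∀ j, 1 ≤ (f j : ℕ)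
  · refine if_congr (and_iff_right hpos).symm (prod_congr rfl fun j _ => ?_) rfl
    obtain ⟨k, hk⟩ := Nat.exists_eq_add_of_le' (hpos j)
    rw [hk, coeff_succ_X_mul, Nat.add_sub_cancel]
  · obtain ⟨j, hj⟩ := not_forall.1 hpos
    rw [if_neg (not_and_of_not_left _ hpos), ite_eq_right_iff]
    exact fun _ => prod_eq_zero (mem_univ j)
      (by rw [Nat.lt_one_iff.1 (not_le.1 hj), coeff_zero_X_mul])

theorem coeff_succ_catalanSeries_pow_succ (r d : ℕ) :
    coeff (d + 1) (catalanSeries ^ (r + 1)) =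
      coeff (d + 1) (catalanSeries ^ r) + coeff d (catalanSeries ^ (r + 2)) := by
  nth_rw 1 [pow_succ]
  nth_rw 2 [← catalanSeries_sq_mul_X_add_one]
  rw [mul_add, mul_one, ← mul_assoc, ← pow_add, map_add, coeff_succ_mul_X, add_comm]

theorem coeff_catalanSeries_pow (r d : ℕ) (h : r ≠ 0 ∨ d ≠ 0) :
    ((coeff d (catalanSeries ^ r) : ℕ) : ℤ) =
      (r + 2 * d - 1).choose d - (r + 2 * d - 1).choose (r + d) := by
  induction d generalizing r with
  | zero =>
    have hr : r ≠ 0 := by simpa using h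
    simp [Nat.choose_eq_zero_of_lt (by omega : r - 1 < r)]
  | succ d ihd =>
    induction r with
    | zero => simp
    | succ r ihr =>
      rw [coeff_succ_catalanSeries_pow_succ, Nat.cast_add, ihr (Or.inr d.succ_ne_zero),
        ihd (r + 2) (Or.inl (by omega)),
        show r + 1 + 2 * (d + 1) - 1 = r + 2 * d + 1 + 1 by omega,
        show r + 1 + (d + 1) = r + d + 1 + 1 by omega,
        Nat.choose_succ_succ' (r + 2 * d + 1) d,
        Nat.choose_succ_succ' (r + 2 * d + 1) (r + d + 1),
        show r + 2 * (d + 1) - 1 = r + 2 * d + 1 by omega,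
        show r + 2 + 2 * d - 1 = r + 2 * d + 1 by omega,
        show r + (d + 1) = r + d + 1 by omega, show r + 2 + d = r + d + 1 + 1 by omega]
      push_cast
      ring

theorem add_two_mul_mul_coeff_catalanSeries_pow (r d : ℕ) :
    (r + 2 * d) * coeff d (catalanSeries ^ r) = r * (r + 2 * d).choose d := by
  rcases r with _ | s
  · rcases d with _ | d <;> simp
  have hcoeff := coeff_catalanSeries_pow (s + 1) d (Or.inl s.succ_ne_zero)
  rw [show s + 1 + 2 * d - 1 = s + 2 * d by omega, show s + 1 + d = s + d + 1 by omega] at hcoeff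
  have h1 := Nat.choose_mul_succ_eq (s + 2 * d) d
  have h2 := Nat.choose_mul_succ_eq (s + 2 * d) (s + d + 1)
  rw [show s + 2 * d + 1 - d = s + d + 1 by omega] at h1
  rw [Nat.choose_symm_of_eq_add (show s + 2 * d + 1 = (s + d + 1) + d by omega),
    show s + 2 * d + 1 - (s + d + 1) = d by omega] at h2
  rw [show s + 1 + 2 * d = s + 2 * d + 1 by omega]
  zify at h1 h2 ⊢
  rw [hcoeff]
  linear_combination h1 - h2

end PowerSeries

open PowerSeries

open Classical in
theorem catalan_self_convolution_general (r n : ℕ) (hrn : r ≤ n) :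
    (2*n - r) *
      ∑ f ∈ (Finset.univ : Finset (Fin r → Fin (n+1))).filter
          (fun f => (∀ j, 1 ≤ (f j).val) ∧ ∑ j, (f j).val = n),
        ∏ j, catalan ((f j).val - 1)
    = r * Nat.choose (2*n - r) n := by
  obtain ⟨d, rfl⟩ := Nat.exists_eq_add_of_le hrn
  have hsum := coeff_X_mul_pow_eq_sum_compositions catalanSeries r (r + d)
  simp only [catalanSeries_coeff] at hsum
  rw [← hsum, mul_pow, coeff_X_pow_mul', if_pos hrn, Nat.add_sub_cancel_left,
    show 2 * (r + d) - r = r + 2 * d by omega,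
    Nat.choose_symm_of_eq_add (show r + 2 * d = (r + d) + d by omega)]
  exact add_two_mul_mul_coeff_catalanSeries_pow r d

open Classical in
/-- The `r`-fold self-convolution identity of Catalan numbers: for positive
integers `r ≤ n`, the sum over all compositions `i₁ + ⋯ + i_r = n` of positive
integers of `C_{i₁-1} ⋯ C_{i_r-1}` equals `(r/(2n-r)) C(2n-r, n)`
(stated multiplied through by `2n - r > 0`). -/
theorem catalan_self_convolution (r n : ℕ) (hr : 1 ≤ r) (hrn : r ≤ n) :
    (2*n - r) *
      ∑ f ∈ (Finset.univ : Finset (Fin r → Fin (n+1))).filter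
          (fun f => (∀ j, 1 ≤ (f j).val) ∧ ∑ j, (f j).val = n),
        ∏ j, catalan ((f j).val - 1)
    = r * Nat.choose (2*n - r) n :=
  catalan_self_convolution_general r n hrn
end

section
/- In a uniformly random perfect matching of 2k vertices on a circle (k >= 2), the probability that a fixed vertex is involved in a crossing equals (2k-3)/(2k-1) - (1/(2k-1)) * sum_{m=2}^{k-1} binomial(k-2, m-2) / binomial(2k-3, 2m-3). -/
open Finset

/-- A pairing (perfect matching) of `n` vertices on a circle, encoded as a
fixed-point-free involution. -/
def IsPairing {n : ℕ} (f : Fin n → Fin n) : Prop :=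
  (∀ i, f (f i) = i) ∧ ∀ i, f i ≠ i

/-- `x` lies strictly between `a` and `b` going clockwise around the circle. -/
def CircBtw {n : ℕ} (a b x : Fin n) : Prop :=
  0 < (x - a).val ∧ (x - a).val < (b - a).val

/-- The chord through `i` and the chord through `j` cross: exactly one of
`j`, `f j` lies strictly between `i` and `f i` clockwise. -/
def ChordsCross {n : ℕ} (f : Fin n → Fin n) (i j : Fin n) : Prop :=
  Xor' (CircBtw i (f i) j) (CircBtw i (f i) (f j))

/-- Vertex `i` is involved in a crossing: its chord crosses some other chord. -/
def CrossVert {n : ℕ} (f : Fin n → Fin n) (i : Fin n) : Prop :=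
  ∃ j, j ≠ i ∧ j ≠ f i ∧ ChordsCross f i j

open Classical in
/-- The set of all pairings of `2k` vertices on a circle. -/
noncomputable def pairings (k : ℕ) : Finset (Fin (2*k) → Fin (2*k)) :=
  Finset.univ.filter IsPairing

open Classical in
/-- The number of vertices involved in at least one crossing. -/
noncomputable def crossCount (k : ℕ) (f : Fin (2*k) → Fin (2*k)) : ℕ :=
  (Finset.univ.filter (fun i => CrossVert f i)).card

open Classical in
/-- `Cr k m`: the number of pairings of `2k` vertices with exactly `m`
vertices involved in a crossing. -/
noncomputable def Cr (k m : ℕ) : ℕ :=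
  ((pairings k).filter (fun f => crossCount k f = m)).card

/-!
Vertex `0` is involved in no crossing exactly when the open arc between `0` and its partner `j`
is closed under the matching. Then `j = 2a + 1` is odd, and such pairings of `2n + 2` points are
a matching of the `2a` points inside the arc times one of the `2b` points outside, `a + b = n`:
`∑ (2a-1)‼ (2b-1)‼` of the `(2n+1)‼` pairings. Since
`(2a-1)‼ (2b-1)‼ C(2n, 2a) = (2n-1)‼ C(n, a)`, the probability of no crossing is
`(2n+1)⁻¹ ∑ₐ C(n, a) / C(2n, 2a)`; the terms `a = 0, n` contribute `2`, and the absorption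
identity turns the others into `C(n-1, m-2) / C(2n-1, 2m-3)`.
-/

open Nat

section Pairings

variable {α : Type*} [Fintype α] [DecidableEq α]

def pairingsOn (S : Finset α) : Finset (α → α) :=
  {f | (∀ i, f (f i) = i) ∧ ∀ i, f i ≠ i ↔ i ∈ S}

@[simp]
lemma mem_pairingsOn {S : Finset α} {f : α → α} :
    f ∈ pairingsOn S ↔ (∀ i, f (f i) = i) ∧ ∀ i, f i ≠ i ↔ i ∈ S := by
  simp [pairingsOn]

/-- Composing with the transposition `(a b)` removes the pair `{a, b}` from a matching and
puts it back. -/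
lemma card_filter_pairingsOn_apply_eq {S : Finset α} {a b : α} (ha : a ∈ S) (hb : b ∈ S)
    (hab : a ≠ b) (P : (α → α) → Prop) [DecidablePred P]
    (hP : ∀ f, P (Equiv.swap a b ∘ f) ↔ P f) :
    #{f ∈ pairingsOn S | f a = b ∧ P f} = #{g ∈ pairingsOn ((S.erase a).erase b) | P g} := by
  apply card_nbij' (Equiv.swap a b ∘ ·) (Equiv.swap a b ∘ ·)
  · intro f hf
    simp only [coe_filter, Set.mem_ofPred_eq, mem_pairingsOn, mem_erase] at hf ⊢
    obtain ⟨⟨hinv, hS⟩, hfa, hPf⟩ := hf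
    refine ⟨⟨fun i => ?_, fun i => ?_⟩, (hP f).2 hPf⟩ <;>
      simp only [Function.comp_apply, Equiv.swap_apply_def] <;> grind
  · intro g hg
    simp only [coe_filter, Set.mem_ofPred_eq, mem_pairingsOn, mem_erase] at hg ⊢
    obtain ⟨⟨hinv, hS⟩, hPg⟩ := hg
    have hga : g a = a := by grind
    refine ⟨⟨fun i => ?_, fun i => ?_⟩, by simp [hga], (hP g).2 hPg⟩ <;>
      simp only [Function.comp_apply, Equiv.swap_apply_def] <;> grind
  · intro f _; ext i; simp
  · intro f _; ext i; simp

/-- At `n = 0` truncated subtraction gives `0‼ = 1`, which counts the empty matching. -/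
def numPairings (n : ℕ) : ℕ := if Even n then (n - 1)‼ else 0

lemma numPairings_eq_mul {n : ℕ} (hn : 1 ≤ n) :
    numPairings n = (n - 1) * numPairings (n - 2) := by
  obtain ⟨m, rfl⟩ : ∃ m, n = m + 1 := ⟨n - 1, by omega⟩
  rcases m with _ | m
  · rfl
  · simp only [numPairings, Nat.add_sub_cancel, show m + 1 + 1 - 2 = m by omega,
      Nat.even_add_one, not_not, Nat.doubleFactorial_add_one]
    split_ifs <;> simp

lemma numPairings_two_mul (n : ℕ) : numPairings (2 * n) = (2 * n - 1)‼ := by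
  simp [numPairings]

lemma card_pairingsOn (S : Finset α) : #(pairingsOn S) = numPairings #S := by
  induction S using Finset.strongInduction with
  | _ S ih =>
  rcases S.eq_empty_or_nonempty with rfl | ⟨a, ha⟩
  · have : pairingsOn (∅ : Finset α) = {id} := by
      ext f
      simp +contextual [funext_iff]
    simp [this, numPairings]
  · have hfibre : ∀ b ∈ S.erase a, #{f ∈ pairingsOn S | f a = b} = numPairings (#S - 2) := by
      intro b hb
      obtain ⟨hba, hb⟩ := mem_erase.1 hb
      have hcard := card_filter_pairingsOn_apply_eq ha hb hba.symm (fun _ => True) (by simp)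
      simp only [and_true, filter_true] at hcard
      rw [hcard, ih _ ((erase_subset _ _).trans_ssubset (erase_ssubset ha)),
        card_erase_of_mem (mem_erase.2 ⟨hba, hb⟩), card_erase_of_mem ha, Nat.sub_sub]
    rw [card_eq_sum_card_fiberwise (f := fun f => f a) (t := S.erase a), sum_congr rfl hfibre,
      sum_const, card_erase_of_mem ha, smul_eq_mul, numPairings_eq_mul (card_pos.2 ⟨a, ha⟩)]
    intro f hf
    obtain ⟨hinv, hS⟩ := mem_pairingsOn.1 hf
    exact mem_erase.2 ⟨(hS a).2 ha, by rw [← hS, hinv]; exact ((hS a).2 ha).symm⟩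

lemma card_filter_pairingsOn_forall_mem {S A : Finset α} (hAS : A ⊆ S) :
    #{f ∈ pairingsOn S | ∀ i ∈ A, f i ∈ A} = #(pairingsOn A) * #(pairingsOn (S \ A)) := by
  rw [← card_product]
  apply card_nbij' (fun f => (A.piecewise f id, (S \ A).piecewise f id))
    (fun p => A.piecewise p.1 p.2)
  · intro f hf
    simp only [coe_filter, Set.mem_ofPred_eq, mem_pairingsOn, coe_product, Set.mem_prod,
      mem_coe] at hf ⊢
    obtain ⟨⟨hinv, hS⟩, hA⟩ := hf
    refine ⟨⟨fun i => ?_, fun i => ?_⟩, ⟨fun i => ?_, fun i => ?_⟩⟩ <;>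
      simp only [piecewise, id, mem_sdiff] <;> grind
  · intro p hp
    simp only [coe_filter, Set.mem_ofPred_eq, mem_pairingsOn, coe_product, Set.mem_prod,
      mem_coe] at hp ⊢
    obtain ⟨⟨hinv₁, hS₁⟩, ⟨hinv₂, hS₂⟩⟩ := hp
    refine ⟨⟨fun i => ?_, fun i => ?_⟩, fun i hi => ?_⟩ <;>
      simp only [piecewise, mem_sdiff] at * <;> grind
  · intro f hf
    simp only [coe_filter, Set.mem_ofPred_eq, mem_pairingsOn] at hf
    ext i
    simp only [piecewise, id, mem_sdiff]
    grind
  · intro p hp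
    simp only [coe_product, Set.mem_prod, mem_coe, mem_pairingsOn] at hp
    ext i <;> simp only [piecewise, id, mem_sdiff] <;> grind

lemma card_pairingsOn_univ (n : ℕ) :
    #(pairingsOn (univ : Finset (Fin (2 * n)))) = (2 * n - 1)‼ := by
  rw [card_pairingsOn, Finset.card_univ, Fintype.card_fin, numPairings_two_mul]

end Pairings

section CrossingAtZero

variable {n : ℕ} [NeZero n]

lemma circBtw_zero_iff {b x : Fin n} : CircBtw 0 b x ↔ x ∈ Ioo 0 b := by
  simp only [CircBtw, sub_zero, mem_Ioo, Fin.lt_def, Fin.val_zero]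

lemma not_crossVert_zero_iff {f : Fin n → Fin n} (hf : ∀ i, f (f i) = i) :
    ¬CrossVert f 0 ↔ ∀ i ∈ Ioo 0 (f 0), f i ∈ Ioo 0 (f 0) := by
  simp only [CrossVert, ChordsCross, circBtw_zero_iff, not_exists, not_and]
  constructor
  · intro h i hi
    by_contra hfi
    exact h i (ne_of_gt (mem_Ioo.1 hi).1) (ne_of_lt (mem_Ioo.1 hi).2) (Or.inl ⟨hi, hfi⟩)
  · rintro h j - - (⟨hj, hfj⟩ | ⟨hfj, hj⟩)
    · exact hfj (h j hj)
    · exact hj (hf j ▸ h _ hfj)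

lemma card_filter_pairingsOn_apply_zero_eq_and_not_crossVert
    [DecidablePred fun f : Fin n → Fin n => CrossVert f 0] {j : Fin n} (hj : j ≠ 0) :
    #{f ∈ pairingsOn univ | f 0 = j ∧ ¬CrossVert f 0} =
      numPairings (j - 1) * numPairings (n - 1 - j) := by
  have hswap : ∀ x, Equiv.swap 0 j x ∈ Ioo 0 j ↔ x ∈ Ioo 0 j := by
    intro x
    simp only [Equiv.swap_apply_def, mem_Ioo]
    grind
  have hsub : Ioo 0 j ⊆ (univ.erase 0).erase j := fun x hx => by
    simp only [mem_erase, mem_univ, and_true]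
    exact ⟨(mem_Ioo.1 hx).2.ne, (mem_Ioo.1 hx).1.ne'⟩
  calc #{f ∈ pairingsOn univ | f 0 = j ∧ ¬CrossVert f 0}
      = #{f ∈ pairingsOn univ | f 0 = j ∧ ∀ i ∈ Ioo 0 j, f i ∈ Ioo 0 j} := by
        refine congrArg card (filter_congr fun f hf => and_congr_right fun hfj => ?_)
        rw [not_crossVert_zero_iff (mem_pairingsOn.1 hf).1, hfj]
    _ = #{g ∈ pairingsOn ((univ.erase 0).erase j) | ∀ i ∈ Ioo 0 j, g i ∈ Ioo 0 j} :=
        card_filter_pairingsOn_apply_eq (mem_univ _) (mem_univ _) hj.symm _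
          (fun f => by simp only [Function.comp_apply, hswap])
    _ = #(pairingsOn (Ioo 0 j)) * #(pairingsOn ((univ.erase 0).erase j \ Ioo 0 j)) := by
        convert card_filter_pairingsOn_forall_mem hsub
    _ = numPairings (j - 1) * numPairings (n - 1 - j) := by
        have hj0 : 0 < j.val := Fin.pos_iff_ne_zero.2 hj
        rw [card_pairingsOn, card_pairingsOn, card_sdiff_of_subset hsub,
          card_erase_of_mem (by simpa using hj), card_erase_of_mem (mem_univ _), Finset.card_univ,
          Fintype.card_fin, Fin.card_Ioo, Fin.val_zero, Nat.sub_zero,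
          show n - 1 - 1 - (j - 1) = n - 1 - j by omega]

lemma card_filter_pairingsOn_not_crossVert_zero
    [DecidablePred fun f : Fin n → Fin n => CrossVert f 0] (hn : 2 ≤ n) :
    #{f ∈ pairingsOn (univ : Finset (Fin n)) | ¬CrossVert f 0} =
      ∑ p ∈ antidiagonal (n - 2), numPairings p.1 * numPairings p.2 := by
  obtain ⟨m, rfl⟩ : ∃ m, n = m + 2 := ⟨n - 2, by omega⟩
  rw [card_eq_sum_card_fiberwise (f := fun f => f 0) (t := univ) fun _ _ => mem_coe.2 (mem_univ _),
    Fin.sum_univ_succ, Nat.sum_antidiagonal_eq_sum_range_succ_mk, ← Fin.sum_univ_eq_sum_range]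
  have hzero : #{f ∈ {f ∈ pairingsOn (univ : Finset (Fin (m + 2))) | ¬CrossVert f 0} |
      f 0 = 0} = 0 :=
    card_eq_zero.2 <| filter_eq_empty_iff.2 fun f hf ↦
      ((mem_pairingsOn.1 (mem_filter.1 hf).1).2 0).2 (mem_univ _)
  rw [hzero, zero_add]
  refine Fintype.sum_congr _ _ fun i => ?_
  rw [filter_filter, filter_congr fun _ _ ↦ and_comm,
    card_filter_pairingsOn_apply_zero_eq_and_not_crossVert (Fin.succ_ne_zero i), Fin.val_succ,
    Nat.add_sub_cancel, show m + 2 - 1 - (i + 1) = m + 2 - 2 - i by omega]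

end CrossingAtZero

lemma sum_antidiagonal_two_mul {M : Type*} [AddCommMonoid M] (g : ℕ × ℕ → M)
    (hg : ∀ p : ℕ × ℕ, Odd p.1 → g p = 0) (m : ℕ) :
    ∑ p ∈ antidiagonal (2 * m), g p = ∑ p ∈ antidiagonal m, g (2 * p.1, 2 * p.2) := by
  rw [← sum_image (g := fun p : ℕ × ℕ => (2 * p.1, 2 * p.2)) fun p _ q _ h => by
    simp only [Prod.mk.injEq] at h; ext <;> omega]
  refine (sum_subset (fun p hp => ?_) fun p hp hnot => hg p ?_).symm
  · simp only [mem_image, HasAntidiagonal.mem_antidiagonal] at hp ⊢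
    obtain ⟨q, hq, rfl⟩ := hp
    omega
  · by_contra heven
    obtain ⟨a, ha⟩ := not_odd_iff_even.1 heven
    rw [HasAntidiagonal.mem_antidiagonal] at hp
    refine hnot (mem_image.2 ⟨(a, p.2 / 2), ?_, Prod.ext ?_ ?_⟩)
    · rw [HasAntidiagonal.mem_antidiagonal]
      omega
    all_goals dsimp only; omega

lemma factorial_two_mul (m : ℕ) : (2 * m)! = 2 ^ m * m ! * (2 * m - 1)‼ := by
  rcases m with _ | m
  · rfl
  · rw [show 2 * (m + 1) = 2 * m + 1 + 1 by ring, factorial_eq_mul_doubleFactorial,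
      show 2 * m + 1 + 1 = 2 * (m + 1) by ring, doubleFactorial_two_mul,
      show 2 * (m + 1) - 1 = 2 * m + 1 by omega]

lemma doubleFactorial_mul_doubleFactorial_mul_choose (a b : ℕ) :
    (2 * a - 1)‼ * (2 * b - 1)‼ * (2 * (a + b)).choose (2 * a) =
      (2 * (a + b) - 1)‼ * (a + b).choose a := by
  refine Nat.eq_of_mul_eq_mul_right (by positivity : 0 < 2 ^ a * a ! * (2 ^ b * b !)) ?_
  calc (2 * a - 1)‼ * (2 * b - 1)‼ * (2 * (a + b)).choose (2 * a) *
        (2 ^ a * a ! * (2 ^ b * b !))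
      = (2 * (a + b)).choose (2 * a) * (2 * a)! * (2 * (a + b) - 2 * a)! := by
        rw [factorial_two_mul, show 2 * (a + b) - 2 * a = 2 * b by omega, factorial_two_mul]
        ring
    _ = 2 ^ (a + b) * (a + b)! * (2 * (a + b) - 1)‼ := by
        rw [choose_mul_factorial_mul_factorial (by omega), factorial_two_mul]
    _ = (2 * (a + b) - 1)‼ * (a + b).choose a * (2 ^ a * a ! * (2 ^ b * b !)) := by
        rw [← choose_mul_factorial_mul_factorial (Nat.le_add_right a b), Nat.add_sub_cancel_left]
        ring

lemma choose_succ_div_choose_two_mul_add_two (c i : ℕ) :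
    ((c + 1).choose (i + 1) : ℚ) / (2 * c + 2).choose (2 * i + 2) =
      (c.choose i : ℚ) / (2 * c + 1).choose (2 * i + 1) := by
  have h₁ : ((c + 1).choose (i + 1) : ℚ) = (c + 1) / (i + 1) * c.choose i := by
    rw [div_mul_eq_mul_div, eq_div_iff (by positivity)]
    exact_mod_cast (add_one_mul_choose_eq c i).symm
  have h₂ : ((2 * c + 2).choose (2 * i + 2) : ℚ) =
      (c + 1) / (i + 1) * (2 * c + 1).choose (2 * i + 1) := by
    rw [div_mul_eq_mul_div, eq_div_iff (by positivity)]
    have h : (2 * c + 2) * (2 * c + 1).choose (2 * i + 1) =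
        (2 * c + 2).choose (2 * i + 2) * (2 * i + 2) := add_one_mul_choose_eq _ _
    have hq : (2 * c + 2 : ℚ) * (2 * c + 1).choose (2 * i + 1) =
        (2 * c + 2).choose (2 * i + 2) * (2 * i + 2) := by exact_mod_cast h
    linear_combination -hq / 2
  rw [h₁, h₂, mul_div_mul_left _ _ (by positivity)]

lemma sum_range_choose_div_choose_two_mul {n : ℕ} (hn : 1 ≤ n) :
    ∑ a ∈ range (n + 1), (n.choose a : ℚ) / (2 * n).choose (2 * a) =
      2 + ∑ m ∈ Icc 2 n, ((n - 1).choose (m - 2) : ℚ) / (2 * n - 1).choose (2 * m - 3) := by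
  obtain ⟨c, rfl⟩ : ∃ c, n = c + 1 := ⟨n - 1, by omega⟩
  rw [sum_range_succ, sum_range_succ', Nat.add_sub_cancel,
    show 2 * (c + 1) - 1 = 2 * c + 1 by omega, ← Ico_add_one_right_eq_Icc, sum_Ico_eq_sum_range,
    show c + 1 + 1 - 2 = c by omega]
  simp only [choose_zero_right, choose_self, Nat.mul_zero, Nat.cast_one, div_one,
    Nat.add_sub_cancel_left, show ∀ i, 2 * (2 + i) - 3 = 2 * i + 1 by omega,
    ← choose_succ_div_choose_two_mul_add_two]
  simp only [mul_add, mul_one]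
  ring

lemma sum_antidiagonal_doubleFactorial_mul (n : ℕ) :
    ((∑ p ∈ antidiagonal n, (2 * p.1 - 1)‼ * (2 * p.2 - 1)‼ : ℕ) : ℚ) =
      (2 * n - 1)‼ * ∑ a ∈ range (n + 1), (n.choose a : ℚ) / (2 * n).choose (2 * a) := by
  rw [Nat.sum_antidiagonal_eq_sum_range_succ_mk, Nat.cast_sum, mul_sum]
  refine sum_congr rfl fun a ha => ?_
  have hle : a ≤ n := Nat.lt_succ_iff.1 (mem_range.1 ha)
  have h := doubleFactorial_mul_doubleFactorial_mul_choose a (n - a)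
  rw [Nat.add_sub_cancel' hle] at h
  rw [← mul_div_assoc, eq_div_iff (Nat.cast_ne_zero.2 (choose_pos (by omega)).ne')]
  exact_mod_cast h

lemma card_filter_div_card_eq_one_sub {β K : Type*} [DivisionRing K] [CharZero K]
    {s : Finset β} (hs : s.Nonempty) (p : β → Prop) [DecidablePred p] :
    (#{x ∈ s | p x} : K) / #s = 1 - (#{x ∈ s | ¬p x} : K) / #s := by
  rw [eq_sub_iff_add_eq, ← add_div, div_eq_one_iff_eq (by simpa using hs.ne_empty)]
  exact_mod_cast card_filter_add_card_filter_not p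

lemma pairings_eq_pairingsOn_univ (k : ℕ) : pairings k = pairingsOn univ := by
  ext f
  simp [pairings, IsPairing]

lemma card_filter_not_crossVert_zero_div_card (n : ℕ)
    [DecidablePred fun f : Fin (2 * (n + 1)) → Fin (2 * (n + 1)) => CrossVert f 0] :
    (#{f ∈ pairingsOn (univ : Finset (Fin (2 * (n + 1)))) | ¬CrossVert f 0} : ℚ) /
        #(pairingsOn (univ : Finset (Fin (2 * (n + 1))))) =
      (∑ a ∈ range (n + 1), (n.choose a : ℚ) / (2 * n).choose (2 * a)) / (2 * n + 1) := by
  have hodd (p : ℕ × ℕ) (hp : Odd p.1) : numPairings p.1 * numPairings p.2 = 0 := by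
    simp [numPairings, Nat.not_even_iff_odd.2 hp]
  rw [card_filter_pairingsOn_not_crossVert_zero (by omega),
    show 2 * (n + 1) - 2 = 2 * n by omega, sum_antidiagonal_two_mul _ hodd, card_pairingsOn_univ]
  simp only [numPairings_two_mul]
  rw [sum_antidiagonal_doubleFactorial_mul, show 2 * (n + 1) - 1 = 2 * n + 1 by omega,
    doubleFactorial_add_one]
  push_cast
  field_simp

open Classical in
/-- In a uniformly random pairing of `2k` vertices on a circle (`k ≥ 2`), the
probability that a fixed vertex (vertex `1`) is involved in a crossing equals
`(2k-3)/(2k-1) - (1/(2k-1)) ∑_{m=2}^{k-1} C(k-2, m-2)/C(2k-3, 2m-3)`. -/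
theorem prob_vertex_crossing (k : ℕ) (hk : 2 ≤ k) :
    (((pairings k).filter
        (fun f => CrossVert f (⟨0, by omega⟩ : Fin (2*k)))).card : ℚ)
      / ((pairings k).card : ℚ)
    = ((2*k : ℚ) - 3) / ((2*k : ℚ) - 1)
      - (1 / ((2*k : ℚ) - 1)) * ∑ m ∈ Finset.Icc 2 (k - 1),
          (Nat.choose (k - 2) (m - 2) : ℚ) / (Nat.choose (2*k - 3) (2*m - 3) : ℚ) := by
  obtain ⟨n, rfl⟩ : ∃ n, k = n + 1 := ⟨k - 1, by omega⟩
  have hzero : (⟨0, by omega⟩ : Fin (2 * (n + 1))) = 0 := rfl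
  have hne : (pairingsOn (univ : Finset (Fin (2 * (n + 1))))).Nonempty :=
    card_pos.1 (card_pairingsOn_univ _ ▸ doubleFactorial_pos _)
  simp only [hzero, pairings_eq_pairingsOn_univ, Nat.add_sub_cancel,
    show n + 1 - 2 = n - 1 by omega, show 2 * (n + 1) - 3 = 2 * n - 1 by omega]
  rw [card_filter_div_card_eq_one_sub hne, card_filter_not_crossVert_zero_div_card,
    sum_range_choose_div_choose_two_mul (by omega),
    show 2 * ((n + 1 : ℕ) : ℚ) - 1 = 2 * n + 1 by push_cast; ring]
  field_simp
  push_cast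
  ring
end
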